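/- arXiv:1112.0371 — 8 statements merged into one kernel-verified Lean document; each statement's English description precedes it below -/
import Mathlib

section
/- For each i ∈ {1, ..., m} let f_i : F_2^m → F_2^m be f_i(x) = x + e_i with X_i = {x : x · e_i = 0}, and let f_0 be the identity with X_0 = {x : x · (1,1,...,1) = 0}. Then for all distinct i, j ∈ {0, 1, ..., m}, the sets f_i(X_i) and f_j(X_i) are disjoint. -/
/-- Inner product over F_2. -/
def dot2 {m : ℕ} (x y : Fin m → ZMod 2) : ZMod 2 := ∑ i, x i * y i

/-!
The sets `X t` are kernels of the linear forms `x ↦ x · c t`, so a common point `x + w i = y + w j`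
of the two translates would force `w i · c i = w j · c i`; but for `i ≠ j` these inner products
are `0` and `1` in some order.
-/

theorem dot2_eq_dotProduct {m : ℕ} (x y : Fin m → ZMod 2) : dot2 x y = x ⬝ᵥ y := rfl

theorem disjoint_image_add_of_map_ne {G H : Type*} [AddZeroClass G] [AddZeroClass H]
    (φ : G →+ H) {a b : G} (hab : φ a ≠ φ b) :
    Disjoint ((· + a) '' {x | φ x = 0}) ((· + b) '' {x | φ x = 0}) := by
  rw [Set.disjoint_left]
  rintro _ ⟨x, hx, rfl⟩ ⟨y, hy, hxy⟩
  have := congrArg φ hxy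
  simp only [map_add] at this
  change φ x = 0 at hx
  change φ y = 0 at hy
  rw [hx, hy, zero_add, zero_add] at this
  exact hab this.symm

theorem ite_succ_val_eq_single {R : Type*} [Zero R] [One R] {m : ℕ} (k : Fin m) :
    (fun l : Fin m => if (l : ℕ) + 1 = (k.succ : ℕ) then (1 : R) else 0) = Pi.single k 1 := by
  ext l
  simp [Pi.single_apply, Fin.ext_iff]

theorem stmt_3 (m : ℕ) (i j : Fin (m + 1)) (hij : i ≠ j) :
    -- translation vector: w 0 = 0 (identity), w i = e_i for i ≥ 1
    let w : Fin (m + 1) → (Fin m → ZMod 2) := fun t =>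
      if (t : ℕ) = 0 then 0 else fun k => if (k : ℕ) + 1 = (t : ℕ) then 1 else 0
    -- defining vector of X_t : all-ones for t = 0, e_t for t ≥ 1
    let c : Fin (m + 1) → (Fin m → ZMod 2) := fun t =>
      if (t : ℕ) = 0 then (fun _ => 1) else w t
    let X : Fin (m + 1) → Set (Fin m → ZMod 2) := fun t => {x | dot2 x (c t) = 0}
    Disjoint ((fun x => x + w i) '' X i) ((fun x => x + w j) '' X i) := by
  intro w c X
  have hw_zero : w 0 = 0 := by simp [w]
  have hw_succ (k : Fin m) : w k.succ = Pi.single k 1 := by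
    simp only [w, Fin.val_succ, Nat.add_one_ne_zero, if_false]
    exact ite_succ_val_eq_single k
  have hc_zero : c 0 = 1 := by simp only [c, Fin.val_zero, ↓reduceIte]; rfl
  have hc_succ (k : Fin m) : c k.succ = Pi.single k 1 := by
    simp only [c, Fin.val_succ, Nat.add_one_ne_zero, if_false, hw_succ]
  have key : dot2 (w i) (c i) ≠ dot2 (w j) (c i) := by
    cases i using Fin.cases <;> cases j using Fin.cases <;>
      simp_all [dot2_eq_dotProduct]
  exact disjoint_image_add_of_map_ne
    (AddMonoidHom.mk' (dot2 · (c i)) fun x y => add_dotProduct x y (c i)) key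
end

section
/- Let F = {f_0, ..., f_{k-1}} be a set of permutations of {0, 1, ..., 2^m - 1} together with subsets X_0, ..., X_{k-1} each of size 2^{m-1}, satisfying the orthogonality condition: |f_i(X_i) ∩ f_j(X_i)| = 2^{m-1} if i = j and 0 if i ≠ j, for all i, j. Then k ≤ m + 1. -/
/-!
Let `A i = f i '' X i`. As `2 ^ m ≤ 2 * |X i|`, orthogonality forces `f j '' X i = (A i)ᶜ` for
`j ≠ i`. Hence, for `t ≠ 0`, the permutation `f t ∘ (f 0)⁻¹` toggles membership in `A t` and
preserves membership in every other `A i` with `i ≠ 0`. Starting from any point, these `k - 1`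
toggles realise every membership pattern in `A 1, …, A (k - 1)`, so `2 ^ (k - 1) ≤ 2 ^ m`.
-/

open Finset

section Toggles

variable {α ι : Type*} [DecidableEq α] [Fintype ι] [DecidableEq ι]

def membershipSet (S : ι → Finset α) (x : α) : Finset ι := {i | x ∈ S i}

lemma membershipSet_apply_of_toggle {S : ι → Finset α} {g : ι → Equiv.Perm α}
    (hg : ∀ i j x, g i x ∈ S j ↔ (x ∈ S j ↔ i ≠ j)) (a : ι) (x : α) :
    membershipSet S (g a x) = symmDiff (membershipSet S x) {a} := by
  ext j
  simp only [membershipSet, mem_filter, mem_univ, true_and, mem_symmDiff, mem_singleton, hg]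
  by_cases h : a = j <;> simp [h, eq_comm]

lemma membershipSet_surjective_of_toggle [Nonempty α] {S : ι → Finset α}
    {g : ι → Equiv.Perm α} (hg : ∀ i j x, g i x ∈ S j ↔ (x ∈ S j ↔ i ≠ j)) :
    Function.Surjective (membershipSet S) := by
  obtain ⟨x₀⟩ := ‹Nonempty α›
  suffices h : ∀ s, ∃ x, membershipSet S x = symmDiff (membershipSet S x₀) s by
    intro t
    simpa [symmDiff_symmDiff_cancel_left] using h (symmDiff (membershipSet S x₀) t)
  intro s
  induction s using Finset.induction_on with
  | empty => exact ⟨x₀, (symmDiff_bot _).symm⟩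
  | insert a s ha ih =>
    obtain ⟨x, hx⟩ := ih
    have hinsert : insert a s = symmDiff s {a} := by
      ext j
      by_cases h : j = a <;> simp [mem_symmDiff, h, ha]
    exact ⟨g a x, by rw [membershipSet_apply_of_toggle hg, hx, hinsert, symmDiff_assoc]⟩

theorem two_pow_card_le_card_of_toggle [Fintype α] [Nonempty α] {S : ι → Finset α}
    {g : ι → Equiv.Perm α} (hg : ∀ i j x, g i x ∈ S j ↔ (x ∈ S j ↔ i ≠ j)) :
    2 ^ Fintype.card ι ≤ Fintype.card α :=
  Fintype.card_finset (α := ι) ▸ Fintype.card_le_of_surjective _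
    (membershipSet_surjective_of_toggle hg)

end Toggles

lemma apply_mem_image_iff_of_disjoint {α : Type*} [Fintype α] [DecidableEq α]
    {X : Finset α} {f g : Equiv.Perm α} (hdisj : Disjoint (X.image f) (X.image g))
    (hcard : Fintype.card α ≤ 2 * #X) (x : α) :
    g x ∈ X.image f ↔ x ∉ X := by
  have hcompl : (X.image f)ᶜ = X.image g := by
    refine compl_eq_of_disjoint_of_card_add_eq hdisj (le_antisymm ?_ ?_)
    · rw [← card_union_of_disjoint hdisj]
      exact card_le_univ _
    · simpa [card_image_of_injective _ f.injective, card_image_of_injective _ g.injective,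
        two_mul] using hcard
  rw [← not_iff_not, not_not, ← mem_compl, hcompl, g.injective.mem_finset_image]

theorem stmt_4 (m k : ℕ) (f : Fin k → Equiv.Perm (Fin (2 ^ m)))
    (X : Fin k → Finset (Fin (2 ^ m)))
    (hcard : ∀ i, (X i).card = 2 ^ (m - 1))
    (horth : ∀ i j, (((X i).image (f i)) ∩ ((X i).image (f j))).card =
      if i = j then 2 ^ (m - 1) else 0) :
    k ≤ m + 1 := by
  obtain _ | n := k
  · omega
  have hmem : ∀ i j x, f j x ∈ (X i).image (f i) ↔ (x ∈ X i ↔ i = j) := by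
    intro i j x
    rcases eq_or_ne i j with rfl | hij
    · simp [(f i).injective.mem_finset_image]
    · have hdisj : Disjoint ((X i).image (f i)) ((X i).image (f j)) :=
        disjoint_iff_inter_eq_empty.2 (card_eq_zero.1 (by rw [horth, if_neg hij]))
      have hsize : Fintype.card (Fin (2 ^ m)) ≤ 2 * #(X i) := by
        rw [Fintype.card_fin, hcard, ← pow_succ']
        exact Nat.pow_le_pow_right two_pos (by omega)
      simpa [hij] using apply_mem_image_iff_of_disjoint hdisj hsize x
  have htoggle := two_pow_card_le_card_of_toggle (α := Fin (2 ^ m))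
    (S := fun i : Fin n => (X i.succ).image (f i.succ)) (g := fun i => f i.succ * (f 0)⁻¹) (by
      intro i j y
      obtain ⟨x, rfl⟩ := (f 0).surjective y
      simp only [Equiv.Perm.mul_apply, Equiv.Perm.coe_inv, Equiv.symm_apply_apply, hmem, Fin.succ_ne_zero,
        Fin.succ_inj, iff_false]
      tauto)
  rw [Fintype.card_fin, Fintype.card_fin, Nat.pow_le_pow_iff_right (by norm_num)] at htoggle
  omega
end

section
/- Let D_m be the directed graph on vertex set {w ∈ F_2^m : w ≠ 0} with an edge from w_1 to w_2 iff |w_2 \ w_1| := #{i : (w_2)_i = 1, (w_1)_i = 0} is odd. Then every induced subgraph H of D_m has density d_H = E(H)/|V(H)|^2 at most (m-1)/m. -/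
/-- `|w2 \ w1|`: number of coordinates where `w2` has a 1 and `w1` has a 0. -/
def setDiffCard {m : ℕ} (w2 w1 : Fin m → ZMod 2) : ℕ :=
  (Finset.univ.filter (fun i => w2 i = 1 ∧ w1 i = 0)).card

def dotp {m : ℕ} (u v : Fin m → ZMod 2) : ZMod 2 := ∑ i, u i * v i
def wsum {m : ℕ} (u : Fin m → ZMod 2) : ZMod 2 := ∑ i, u i

lemma zmod2_cases (x : ZMod 2) : x = 0 ∨ x = 1 := by revert x; decide

lemma dotp_comm {m : ℕ} (u v : Fin m → ZMod 2) : dotp u v = dotp v u := by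
  unfold dotp; exact Finset.sum_congr rfl (fun i _ => mul_comm _ _)

lemma dotp_self {m : ℕ} (u : Fin m → ZMod 2) : dotp u u = wsum u := by
  unfold dotp wsum
  exact Finset.sum_congr rfl
    (fun i _ => by rcases zmod2_cases (u i) with h | h <;> rw [h] <;> decide)

lemma odd_iff_cast (n : ℕ) : Odd n ↔ (n : ZMod 2) = 1 := by
  have h0 : (n : ZMod 2) = ((n % 2 : ℕ) : ZMod 2) := (ZMod.natCast_mod n 2).symm
  rw [Nat.odd_iff]
  constructor
  · intro h; rw [h0, h]; decide
  · intro h; by_contra hne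
    have h2 : n % 2 = 0 := by omega
    rw [h0, h2] at h; exact (by decide : ¬ ((0:ℕ) : ZMod 2) = 1) h

lemma odd_setDiff_iff {m : ℕ} (w1 w2 : Fin m → ZMod 2) :
    Odd (setDiffCard w2 w1) ↔ dotp w1 w2 + wsum w2 = 1 := by
  rw [odd_iff_cast]
  unfold setDiffCard
  rw [Finset.card_filter]
  push_cast
  have hterm : ∀ i, (if w2 i = 1 ∧ w1 i = 0 then (1 : ZMod 2) else 0)
      = w1 i * w2 i + w2 i := by
    intro i
    rcases zmod2_cases (w1 i) with h1 | h1 <;> rcases zmod2_cases (w2 i) with h2 | h2 <;>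
      rw [h1, h2] <;> decide
  rw [Finset.sum_congr rfl (fun i _ => hterm i), Finset.sum_add_distrib]
  rfl
lemma cliqueO {m : ℕ} (S : Finset (Fin m → ZMod 2))
    (h1 : ∀ v ∈ S, dotp v v = 1)
    (h2 : ∀ u ∈ S, ∀ v ∈ S, u ≠ v → dotp u v = 0) : S.card ≤ m := by
  have hli : LinearIndependent (ZMod 2) (fun x : ↥S => (x : Fin m → ZMod 2)) := by
    rw [Fintype.linearIndependent_iff]
    intro g hg u
    have happ := congrArg (fun v : Fin m → ZMod 2 => ∑ i, v i * (u : Fin m → ZMod 2) i) hg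
    simp only [Finset.sum_apply, Pi.smul_apply, smul_eq_mul] at happ
    simp only [Finset.sum_mul] at happ
    rw [Finset.sum_comm] at happ
    have hrw : ∀ x : ↥S, ∑ i, g x * (x : Fin m → ZMod 2) i * (u : Fin m → ZMod 2) i
        = g x * dotp (x : Fin m → ZMod 2) u := by
      intro x; rw [dotp, Finset.mul_sum]; exact Finset.sum_congr rfl fun i _ => by ring
    rw [Finset.sum_congr rfl (fun x _ => hrw x)] at happ
    have hsingle : ∑ x : ↥S, g x * dotp (x : Fin m → ZMod 2) u = g u := by
      rw [Fintype.sum_eq_single u]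
      · rw [h1 u u.2]; ring
      · intro x hx
        rw [h2 x x.2 u u.2 (fun h => hx (Subtype.ext h))]; ring
    rw [hsingle] at happ
    simpa using happ
  have := hli.fintype_card_le_finrank
  rwa [Module.finrank_fintype_fun_eq_card, Fintype.card_fin, Fintype.card_coe] at this
lemma cliqueE {m : ℕ} (hm : 1 ≤ m) (S : Finset (Fin m → ZMod 2))
    (h1 : ∀ v ∈ S, wsum v = 0)
    (h2 : ∀ u ∈ S, ∀ v ∈ S, u ≠ v → dotp u v = 1) : S.card ≤ m := by
  classical
  set e0 : Fin m → ZMod 2 := fun i => if i = ⟨0, hm⟩ then 1 else 0 with he0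
  set fam : (↥S ⊕ Unit) → (Fin (m+1) → ZMod 2) :=
    (fun x => Sum.elim (fun s : ↥S => Fin.snoc (s : Fin m → ZMod 2) 1) (fun _ => Fin.snoc e0 0) x)
    with hfam
  have hwse0 : wsum e0 = 1 := by
    rw [wsum, he0, Finset.sum_ite_eq' Finset.univ (⟨0, hm⟩ : Fin m) (fun _ => (1:ZMod 2))]
    simp
  have hli : LinearIndependent (ZMod 2) fam := by
    rw [Fintype.linearIndependent_iff]
    intro g hg
    -- step A : g (inr) = 0
    have hA : g (Sum.inr ()) = 0 := by
      have happ := congrArg (fun w : Fin (m+1) → ZMod 2 => ∑ i : Fin m, w (Fin.castSucc i)) hg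
      simp only [Finset.sum_apply, Pi.smul_apply, smul_eq_mul, Pi.zero_apply] at happ
      rw [Finset.sum_comm] at happ
      have hrw : ∀ x : ↥S ⊕ Unit, ∑ i : Fin m, g x * fam x (Fin.castSucc i)
          = g x * wsum (fun i => fam x (Fin.castSucc i)) := by
        intro x; rw [wsum, Finset.mul_sum]
      rw [Finset.sum_congr rfl (fun x _ => hrw x)] at happ
      have hws : ∀ x : ↥S ⊕ Unit, wsum (fun i => fam x (Fin.castSucc i))
          = Sum.elim (fun s : ↥S => (0 : ZMod 2)) (fun _ => 1) x := by
        rintro (s | u)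
        · simp only [hfam, Sum.elim_inl, Fin.snoc_castSucc]
          exact h1 s s.2
        · simp only [hfam, Sum.elim_inr, Fin.snoc_castSucc]
          exact hwse0
      rw [Finset.sum_congr rfl (fun x _ => by rw [hws x])] at happ
      rw [Fintype.sum_sum_type] at happ
      simpa using happ
    intro x
    match x with
    | Sum.inr () => exact hA
    | Sum.inl u =>
      set uu : Fin (m+1) → ZMod 2 := Fin.snoc (u : Fin m → ZMod 2) 1 with huu
      have happ := congrArg (fun w : Fin (m+1) → ZMod 2 => ∑ i : Fin (m+1), w i * uu i) hg
      simp only [Finset.sum_apply, Pi.smul_apply, smul_eq_mul, Pi.zero_apply] at happ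
      simp only [Finset.sum_mul] at happ
      rw [Finset.sum_comm] at happ
      have hpsi : ∀ x : ↥S ⊕ Unit, ∑ i : Fin (m+1), g x * fam x i * uu i
          = g x * ∑ i : Fin (m+1), fam x i * uu i := by
        intro x; rw [Finset.mul_sum]; exact Finset.sum_congr rfl fun i _ => by ring
      rw [Finset.sum_congr rfl (fun x _ => hpsi x)] at happ
      rw [Fintype.sum_sum_type] at happ
      have hval : ∀ s : ↥S, (∑ i : Fin (m+1), fam (Sum.inl s) i * uu i)
          = if s = u then 1 else 0 := by
        intro s
        have : (∑ i : Fin (m+1), fam (Sum.inl s) i * uu i)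
            = (∑ i : Fin m, (s : Fin m → ZMod 2) i * (u : Fin m → ZMod 2) i) + 1 * 1 := by
          rw [Fin.sum_univ_castSucc]
          simp only [hfam, huu, Sum.elim_inl, Fin.snoc_castSucc, Fin.snoc_last]
        rw [this]
        by_cases hsu : s = u
        · subst hsu
          have : (∑ i : Fin m, (s : Fin m → ZMod 2) i * (s : Fin m → ZMod 2) i) = 0 := by
            rw [← dotp, dotp_self]; exact h1 s s.2
          rw [this]; simp
        · have : (∑ i : Fin m, (s : Fin m → ZMod 2) i * (u : Fin m → ZMod 2) i) = 1 := by
            rw [← dotp]; exact h2 s s.2 u u.2 (fun h => hsu (Subtype.ext h))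
          rw [this, if_neg hsu]; decide
      rw [Finset.sum_congr rfl (fun s _ => by rw [hval s])] at happ
      have h2nd : (∑ x : Unit, g (Sum.inr x) * ∑ i : Fin (m+1), fam (Sum.inr x) i * uu i) = 0 := by
        simp [hA]
      rw [h2nd, add_zero] at happ
      have : (∑ s : ↥S, g (Sum.inl s) * if s = u then 1 else 0) = g (Sum.inl u) := by
        rw [Fintype.sum_eq_single u]
        · simp
        · intro x hx; rw [if_neg hx]; ring
      rw [this] at happ
      simpa using happ
  have hcard := hli.fintype_card_le_finrank
  rw [Module.finrank_fintype_fun_eq_card, Fintype.card_fin] at hcard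
  simp only [Fintype.card_sum, Fintype.card_coe, Fintype.card_unit] at hcard
  omega
lemma turanCount {α : Type*} [DecidableEq α] (R : α → α → Prop) [DecidableRel R] :
    ∀ (r : ℕ) (S : Finset α),
    (∀ a ∈ S, ∀ b ∈ S, R a b → R b a) →
    (∀ a ∈ S, ¬ R a a) →
    (∀ T ⊆ S, (∀ a ∈ T, ∀ b ∈ T, a ≠ b → R a b) → T.card ≤ r) →
    r * (∑ u ∈ S, ∑ w ∈ S, if R u w then 1 else 0) ≤ (r - 1) * S.card ^ 2 := by
  intro r
  induction r with
  | zero => intro S _ _ _; simp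
  | succ r ih =>
    intro S hsym hirr hclique
    rcases S.eq_empty_or_nonempty with rfl | hne
    · simp
    obtain ⟨v, hv, hmax⟩ := S.exists_max_image (fun w => (S.filter (fun u => R w u)).card) hne
    set N : Finset α := S.filter (fun u => R v u) with hN
    have hNsub : N ⊆ S := Finset.filter_subset _ _
    set d : ℕ := N.card with hd
    set D : Finset α := S \ N with hD
    set d' : ℕ := D.card with hd'
    have hcards : d' + d = S.card := by
      rw [hd', hd, hD]; exact Finset.card_sdiff_add_card_eq_card hNsub
    have hvN : v ∉ N := by
      rw [hN]; intro h
      exact hirr v hv (Finset.mem_filter.mp h).2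
    -- row sums
    have hrow : ∀ u ∈ S, (∑ w ∈ S, if R u w then 1 else 0) = (S.filter (fun w => R u w)).card := by
      intro u _; rw [Finset.card_filter]
    have hrowle : ∀ u ∈ S, (∑ w ∈ S, if R u w then 1 else 0) ≤ d := by
      intro u hu; rw [hrow u hu]; exact hmax u hu
    -- clique bound in N
    have hcliqueN : ∀ T ⊆ N, (∀ a ∈ T, ∀ b ∈ T, a ≠ b → R a b) → T.card ≤ r := by
      intro T hTN hTcl
      have hvT : v ∉ T := fun h => hvN (hTN h)
      have hins : insert v T ⊆ S := by
        intro a ha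
        rcases Finset.mem_insert.mp ha with rfl | ha
        · exact hv
        · exact hNsub (hTN ha)
      have hinscl : ∀ a ∈ insert v T, ∀ b ∈ insert v T, a ≠ b → R a b := by
        intro a ha b hb hab
        rcases Finset.mem_insert.mp ha with ha' | ha'
        · rcases Finset.mem_insert.mp hb with hb' | hb'
          · exact absurd (ha'.trans hb'.symm) hab
          · subst ha'; exact (Finset.mem_filter.mp (hTN hb')).2
        · rcases Finset.mem_insert.mp hb with hb' | hb'
          · subst hb'; exact hsym b hv a (hNsub (hTN ha')) ((Finset.mem_filter.mp (hTN ha')).2)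
          · exact hTcl a ha' b hb' hab
      have := hclique (insert v T) hins hinscl
      rw [Finset.card_insert_of_notMem hvT] at this
      omega
    -- counting
    set eS : ℕ := ∑ u ∈ S, ∑ w ∈ S, if R u w then 1 else 0 with heS
    set eN : ℕ := ∑ u ∈ N, ∑ w ∈ N, if R u w then 1 else 0 with heN
    have hsplit : eS = (∑ u ∈ D, ∑ w ∈ S, if R u w then 1 else 0)
        + (∑ u ∈ N, ∑ w ∈ S, if R u w then 1 else 0) := by
      rw [heS, hD, Finset.sum_sdiff hNsub]
    have hDbound : (∑ u ∈ D, ∑ w ∈ S, if R u w then 1 else 0) ≤ d' * d := by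
      calc (∑ u ∈ D, ∑ w ∈ S, if R u w then 1 else 0) ≤ ∑ _u ∈ D, d :=
            Finset.sum_le_sum (fun u hu => hrowle u (Finset.mem_sdiff.mp hu).1)
        _ = d' * d := by rw [Finset.sum_const, smul_eq_mul]
    have hNbound : (∑ u ∈ N, ∑ w ∈ S, if R u w then 1 else 0) ≤ eN + d * d' := by
      have hrow2 : ∀ u ∈ N, (∑ w ∈ S, if R u w then 1 else 0)
          ≤ (∑ w ∈ N, if R u w then 1 else 0) + d' := by
        intro u _
        have : (∑ w ∈ S, if R u w then 1 else 0)
            = (∑ w ∈ D, if R u w then 1 else 0) + (∑ w ∈ N, if R u w then 1 else 0) := by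
          rw [hD, Finset.sum_sdiff hNsub]
        rw [this]
        have : (∑ w ∈ D, if R u w then 1 else 0) ≤ d' := by
          calc (∑ w ∈ D, if R u w then 1 else 0) ≤ ∑ _w ∈ D, 1 :=
                Finset.sum_le_sum (fun w _ => by split <;> omega)
            _ = d' := by rw [Finset.sum_const, smul_eq_mul, mul_one]
        omega
      calc (∑ u ∈ N, ∑ w ∈ S, if R u w then 1 else 0)
          ≤ ∑ u ∈ N, ((∑ w ∈ N, if R u w then 1 else 0) + d') := Finset.sum_le_sum hrow2
        _ = eN + d * d' := by rw [Finset.sum_add_distrib, Finset.sum_const, smul_eq_mul, heN]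
    have hcount : eS ≤ eN + d * d' + d' * d := by omega
    -- apply ih
    have hihN := ih N (fun a ha b hb => hsym a (hNsub ha) b (hNsub hb))
      (fun a ha => hirr a (hNsub ha)) hcliqueN
    rw [← hd] at hihN
    -- final algebra
    rcases Nat.eq_zero_or_pos r with rfl | hr
    · -- r = 0 : N must be empty
      have hdzero : d = 0 := by
        rw [hd, Finset.card_eq_zero]
        by_contra hne'
        obtain ⟨u, hu⟩ := Finset.nonempty_iff_ne_empty.mpr hne'
        have := hcliqueN {u} (Finset.singleton_subset_iff.mpr hu)
          (by intro a ha b hb hab; simp at ha hb; subst ha; subst hb; exact absurd rfl hab)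
        simp at this
      have heSzero : eS = 0 := by
        have : eS ≤ ∑ _u ∈ S, d := Finset.sum_le_sum hrowle
        rw [Finset.sum_const, smul_eq_mul, hdzero, mul_zero] at this
        omega
      simp [heSzero]
    · -- r ≥ 1
      obtain ⟨s, rfl⟩ := Nat.exists_eq_add_of_le hr
      have h1 : (1 + s) * eN ≤ s * d ^ 2 := by
        have : 1 + s - 1 = s := by omega
        rw [this] at hihN
        exact hihN
      have h2 : 1 + s + 1 - 1 = 1 + s := by omega
      rw [h2]
      have hn : S.card = d' + d := hcards.symm
      rw [hn]
      zify at h1 hcount ⊢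
      nlinarith [sq_nonneg ((d : ℤ) - (1 + s) * d'), sq_nonneg ((d:ℤ) + d'),
        mul_le_mul_of_nonneg_left hcount (by positivity : (0:ℤ) ≤ (1+s+1)*(1+s))]
theorem stmt_9 (m : ℕ) (H : Finset (Fin m → ZMod 2)) (hH : ∀ w ∈ H, w ≠ 0) :
    let EH : ℕ := ((H ×ˢ H).filter (fun p => Odd (setDiffCard p.2 p.1))).card
    (EH : ℚ) / (H.card : ℚ) ^ 2 ≤ ((m : ℚ) - 1) / (m : ℚ) := by
  intro EH
  classical
  rcases Nat.eq_zero_or_pos m with rfl | hm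
  · -- m = 0 : H is empty
    have hHe : H = ∅ := by
      rw [Finset.eq_empty_iff_forall_notMem]
      intro w hw
      exact hH w hw (funext fun i => i.elim0)
    have : EH = 0 := by simp [EH, hHe]
    rw [this, hHe]
    norm_num
  -- m ≥ 1
  set He : Finset (Fin m → ZMod 2) := H.filter (fun w => wsum w = 0) with hHedef
  set Ho : Finset (Fin m → ZMod 2) := H.filter (fun w => ¬ (wsum w = 0)) with hHodef
  have hHoOne : ∀ w ∈ Ho, wsum w = 1 := by
    intro w hw
    rcases zmod2_cases (wsum w) with h | h
    · exact absurd h (Finset.mem_filter.mp hw).2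
    · exact h
  have hHeZero : ∀ w ∈ He, wsum w = 0 := fun w hw => (Finset.mem_filter.mp hw).2
  set a : ℕ := He.card with hadef
  set b : ℕ := Ho.card with hbdef
  have hab : a + b = H.card := Finset.card_filter_add_card_filter_not _
  -- rewrite EH as a double sum
  have hEH1 : EH = ∑ w1 ∈ H, ∑ w2 ∈ H, if dotp w1 w2 + wsum w2 = 1 then 1 else 0 := by
    show ((H ×ˢ H).filter (fun p => Odd (setDiffCard p.2 p.1))).card = _
    rw [Finset.card_filter, Finset.sum_product]
    exact Finset.sum_congr rfl fun w1 _ => Finset.sum_congr rfl fun w2 _ => by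
      simp only [odd_setDiff_iff]
  -- block decomposition
  set eEE : ℕ := ∑ u ∈ He, ∑ v ∈ He, if dotp u v = 1 then 1 else 0 with heEE
  set eOO : ℕ := ∑ u ∈ Ho, ∑ v ∈ Ho, if dotp u v = 0 then 1 else 0 with heOO
  have hEH2 : EH = eEE + eOO + a * b := by
    rw [hEH1]
    rw [← Finset.sum_filter_add_sum_filter_not H (fun w => wsum w = 0)
      (fun w1 => ∑ w2 ∈ H, if dotp w1 w2 + wsum w2 = 1 then 1 else 0)]
    have inner : ∀ w1 : Fin m → ZMod 2,
        (∑ w2 ∈ H, if dotp w1 w2 + wsum w2 = 1 then 1 else 0)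
        = (∑ v ∈ He, if dotp w1 v = 1 then 1 else 0)
          + (∑ v ∈ Ho, if dotp w1 v = 0 then 1 else 0) := by
      intro w1
      rw [← Finset.sum_filter_add_sum_filter_not H (fun w => wsum w = 0)
        (fun w2 => if dotp w1 w2 + wsum w2 = 1 then 1 else 0)]
      congr 1
      · exact Finset.sum_congr rfl fun v hv => by
          rw [hHeZero v hv, add_zero]
      · exact Finset.sum_congr rfl fun v hv => by
          rw [hHoOne v hv]
          refine if_congr ?_ rfl rfl
          rcases zmod2_cases (dotp w1 v) with h | h <;> rw [h] <;> decide
    have houter : ∀ S : Finset (Fin m → ZMod 2),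
        (∑ w1 ∈ S, ∑ w2 ∈ H, if dotp w1 w2 + wsum w2 = 1 then 1 else 0)
        = (∑ w1 ∈ S, ∑ v ∈ He, if dotp w1 v = 1 then 1 else 0)
          + (∑ w1 ∈ S, ∑ v ∈ Ho, if dotp w1 v = 0 then 1 else 0) := by
      intro S
      rw [← Finset.sum_add_distrib]
      exact Finset.sum_congr rfl fun w1 _ => inner w1
    rw [houter He, houter Ho]
    -- cross terms
    have hcross : (∑ w1 ∈ He, ∑ v ∈ Ho, if dotp w1 v = 0 then 1 else 0)
        + (∑ w1 ∈ Ho, ∑ v ∈ He, if dotp w1 v = 1 then 1 else 0) = a * b := by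
      have hswap : (∑ w1 ∈ Ho, ∑ v ∈ He, if dotp w1 v = 1 then 1 else 0)
          = (∑ u ∈ He, ∑ v ∈ Ho, if dotp u v = 1 then 1 else 0) := by
        rw [Finset.sum_comm]
        exact Finset.sum_congr rfl fun u _ => Finset.sum_congr rfl fun v _ => by
          rw [dotp_comm]
      rw [hswap, ← Finset.sum_add_distrib]
      have : ∀ u ∈ He, ((∑ v ∈ Ho, if dotp u v = 0 then 1 else 0)
          + ∑ v ∈ Ho, if dotp u v = 1 then 1 else 0) = b := by
        intro u _
        rw [← Finset.sum_add_distrib]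
        have : ∀ v ∈ Ho, ((if dotp u v = 0 then 1 else 0)
            + if dotp u v = 1 then 1 else 0) = 1 := by
          intro v _
          rcases zmod2_cases (dotp u v) with h | h <;> rw [h] <;> norm_num
        rw [Finset.sum_congr rfl this, Finset.sum_const, smul_eq_mul, mul_one]
      rw [Finset.sum_congr rfl this, Finset.sum_const, smul_eq_mul, hadef]
    omega
  -- Turán bounds
  have hTee : m * eEE ≤ (m - 1) * a ^ 2 := by
    apply turanCount (fun u v => dotp u v = 1) m He
    · intro u _ v _ h; rw [dotp_comm]; exact h
    · intro u hu h
      rw [dotp_self, hHeZero u hu] at h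
      exact (by decide : ¬ ((0 : ZMod 2) = 1)) h
    · intro T hT hcl
      exact cliqueE hm T (fun v hv => hHeZero v (hT hv)) hcl
  have hToo : m * eOO ≤ (m - 1) * b ^ 2 := by
    apply turanCount (fun u v => dotp u v = 0) m Ho
    · intro u _ v _ h; rw [dotp_comm]; exact h
    · intro u hu h
      rw [dotp_self, hHoOne u hu] at h
      exact (by decide : ¬ ((1 : ZMod 2) = 0)) h
    · intro T hT hcl
      exact cliqueO T (fun v hv => by rw [dotp_self]; exact hHoOne v (hT hv)) hcl
  -- key natural number inequality
  have hkey : m * EH ≤ (m - 1) * H.card ^ 2 := by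
    rcases Nat.lt_or_ge m 2 with hm2 | hm2
    · -- m = 1 : He is empty
      have hm1 : m = 1 := by omega
      have ha0 : a = 0 := by
        rw [hadef, Finset.card_eq_zero, Finset.eq_empty_iff_forall_notMem]
        intro w hw
        have hwH : w ∈ H := (Finset.mem_filter.mp hw).1
        have hws : wsum w = 0 := hHeZero w hw
        have hw0 : w ≠ 0 := hH w hwH
        have : ∃ i, w i ≠ 0 := by
          by_contra hc; push_neg at hc
          exact hw0 (funext fun i => hc i)
        obtain ⟨i0, hi0⟩ := this
        have huniv : (Finset.univ : Finset (Fin m)) = {i0} := by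
          apply Finset.eq_singleton_iff_unique_mem.mpr
          refine ⟨Finset.mem_univ _, fun j _ => ?_⟩
          apply Fin.ext
          have := j.isLt; have := i0.isLt
          omega
        rw [wsum, huniv, Finset.sum_singleton] at hws
        exact hi0 hws
      have hHeEmpty : He = ∅ := Finset.card_eq_zero.mp (by rw [← hadef]; exact ha0)
      have hEe0 : eEE = 0 := by rw [heEE, hHeEmpty]; simp
      have hOo0 : eOO = 0 := by
        rw [hm1] at hToo; simpa using hToo
      rw [hEH2, hEe0, hOo0, ha0]
      simp
    · -- m ≥ 2
      obtain ⟨k, hk⟩ : ∃ k, m = k + 1 := ⟨m - 1, by omega⟩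
      subst hk
      have hk1 : 1 ≤ k := by omega
      rw [Nat.add_sub_cancel] at hTee hToo ⊢
      rw [hEH2, ← hab]
      have h1 : (k + 1) * (a * b) ≤ 2 * k * (a * b) := by
        apply Nat.mul_le_mul_right
        omega
      nlinarith [hTee, hToo, h1]
  -- conclude in ℚ
  rcases Nat.eq_zero_or_pos H.card with hn | hn
  · have hEH0 : EH = 0 := by
      have h1 : EH ≤ ((H ×ˢ H)).card := Finset.card_filter_le _ _
      rw [Finset.card_product, hn] at h1
      omega
    rw [hEH0]
    rw [Nat.cast_zero, zero_div]
    apply div_nonneg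
    · have : (1 : ℚ) ≤ (m : ℚ) := by exact_mod_cast hm
      linarith
    · positivity
  · have hnQ : (0 : ℚ) < (H.card : ℚ) := by exact_mod_cast hn
    have hmQ : (0 : ℚ) < (m : ℚ) := by exact_mod_cast hm
    rw [div_le_div_iff₀ (by positivity) hmQ]
    have hcast : ((m : ℚ) - 1) = ((m - 1 : ℕ) : ℚ) := by
      have : (1:ℕ) ≤ m := hm
      push_cast [Nat.cast_sub this]
      ring
    rw [hcast]
    have : ((m * EH : ℕ) : ℚ) ≤ (((m - 1) * H.card ^ 2 : ℕ) : ℚ) := by exact_mod_cast hkey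
    push_cast at this
    nlinarith [this]
end

section
/- Let r be prime, v ∈ F_r^m nonzero, u ∈ F_r^m, and for l ∈ {0, ..., r-1} let X_v^l = {x ∈ F_r^m : x · v = r - l} (indices mod r) and f_w^l(x) = x + l·w. Define c_{v,u} = v · (v - u) - 1 in F_r. Then for i, j ∈ {0, ..., r-1}: f_u^{-i} f_v^{i}(X_v^i) ∩ f_u^{-j} f_v^{j}(X_v^j) has cardinality |X_v^0| = r^{m-1} if (i - j)·c_{v,u} = 0 in F_r, and is empty otherwise. -/
/-- Inner product over `ZMod r`. -/
def dotr {r m : ℕ} (x y : Fin m → ZMod r) : ZMod r := ∑ i, x i * y i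

lemma dotr_add_left {r m : ℕ} (x y z : Fin m → ZMod r) :
    dotr (x + y) z = dotr x z + dotr y z := by
  simp [dotr, add_mul, Finset.sum_add_distrib]

lemma dotr_smul_left {r m : ℕ} (t : ZMod r) (x z : Fin m → ZMod r) :
    dotr (t • x) z = t * dotr x z := by
  simp [dotr, Finset.mul_sum, mul_assoc]

lemma dotr_comm {r m : ℕ} (x y : Fin m → ZMod r) : dotr x y = dotr y x := by
  simp [dotr, mul_comm]

theorem stmt_12 (r : ℕ) [NeZero r] (hr : r.Prime) (m : ℕ)
    (v u : Fin m → ZMod r) (hv : v ≠ 0) (i j : ZMod r) :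
    let X : ZMod r → Finset (Fin m → ZMod r) := fun l =>
      Finset.univ.filter (fun x => dotr x v = -l)
    -- `F t` is `f_u^{-t} f_v^{t} (X_v^t)`, i.e. the translate of `X_v^t` by `t·(v - u)`
    let F : ZMod r → Finset (Fin m → ZMod r) := fun t =>
      (X t).image (fun x => x + t • (v - u))
    let c : ZMod r := dotr v (v - u) - 1
    ((i - j) * c = 0 →
        (F i ∩ F j).card = (X 0).card ∧ (X 0).card = r ^ (m - 1)) ∧
    ((i - j) * c ≠ 0 → F i ∩ F j = ∅) := by
  intro X F c
  haveI : Fact r.Prime := ⟨hr⟩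
  -- the map x ↦ dotr x v as an AddMonoidHom
  let φ : (Fin m → ZMod r) →+ ZMod r :=
    { toFun := fun x => dotr x v
      map_zero' := by simp [dotr]
      map_add' := fun x y => dotr_add_left x y v }
  obtain ⟨k, hk⟩ : ∃ k, v k ≠ 0 := by
    by_contra h
    push_neg at h
    exact hv (funext h)
  have hsurj : Function.Surjective φ := by
    intro a
    refine ⟨Pi.single k (a * (v k)⁻¹), ?_⟩
    show dotr _ v = a
    rw [dotr, Finset.sum_eq_single k]
    · rw [Pi.single_eq_same, mul_assoc, ZMod.inv_mul_of_unit _ (hk.isUnit), mul_one]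
    · intro b _ hb; simp [Pi.single_eq_of_ne hb]
    · simp
  -- all fibers have the same card
  have hfib : ∀ a b : ZMod r, (X a).card = (X b).card := by
    intro a b
    exact AddMonoidHom.card_fiber_eq_of_mem_range φ (hsurj (-a)) (hsurj (-b))
  -- card of X 0
  have hm : m ≠ 0 := by
    rintro rfl
    exact hv (funext (fun i => i.elim0))
  have hcard0 : (X 0).card = r ^ (m - 1) := by
    have hsum : ∑ a : ZMod r, (X a).card = r ^ m := by
      rw [← Finset.card_biUnion]
      · have : Finset.univ.biUnion (fun a => X a) = Finset.univ := by
          ext x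
          refine ⟨fun _ => Finset.mem_univ x, fun _ => ?_⟩
          exact Finset.mem_biUnion.2 ⟨-dotr x v, Finset.mem_univ _,
            Finset.mem_filter.2 ⟨Finset.mem_univ _, by simp⟩⟩
        rw [this]
        simp [Fintype.card_fun, ZMod.card]
      · intro a _ b _ hab
        simp only [Finset.disjoint_left, X, Finset.mem_filter]
        rintro x ⟨-, h1⟩ ⟨-, h2⟩
        exact hab (neg_injective (h1 ▸ h2))
    have : (r : ℕ) * (X 0).card = r ^ m := by
      calc r * (X 0).card = ∑ _a : ZMod r, (X 0).card := by
            simp [ZMod.card]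
        _ = ∑ a : ZMod r, (X a).card := Finset.sum_congr rfl (fun a _ => hfib 0 a)
        _ = r ^ m := hsum
    have hrm : r ^ m = r * r ^ (m - 1) := by
      conv_lhs => rw [← Nat.succ_pred_eq_of_pos (Nat.pos_of_ne_zero hm)]
      rw [pow_succ']
      rfl
    have := this.trans hrm
    exact Nat.eq_of_mul_eq_mul_left (Nat.pos_of_ne_zero (NeZero.ne r)) this
  -- F t = X (-(t*c))
  have hF : ∀ t : ZMod r, F t = X (-(t * c)) := by
    intro t
    ext y
    simp only [F, X, Finset.mem_image, Finset.mem_filter, Finset.mem_univ, true_and, neg_neg]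
    constructor
    · rintro ⟨x, hx, rfl⟩
      rw [dotr_add_left, dotr_smul_left, hx, dotr_comm (v - u) v]
      simp only [c]
      ring
    · intro hy
      refine ⟨y - t • (v - u), ?_, by abel⟩
      have h1 : dotr (y - t • (v - u)) v + dotr (t • (v - u)) v = dotr y v := by
        rw [← dotr_add_left]; congr 1; abel
      have h2 : dotr (t • (v - u)) v = t * dotr v (v - u) := by
        rw [dotr_smul_left, dotr_comm (v - u) v]
      have h3 : dotr (y - t • (v - u)) v = t * c - t * dotr v (v - u) := by
        linear_combination h1 - h2 + hy
      rw [h3]; simp only [c]; ring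
  constructor
  · intro h0
    have hic : i * c = j * c := by linear_combination h0
    have : F i ∩ F j = X (-(i * c)) := by
      rw [hF i, hF j, hic, Finset.inter_self]
    rw [this]
    exact ⟨hfib _ _, hcard0⟩
  · intro hne
    rw [hF i, hF j]
    ext y
    simp only [Finset.mem_inter, X, Finset.mem_filter, Finset.mem_univ, true_and,
      Finset.notMem_empty, iff_false, not_and, neg_neg]
    intro h1 h2
    exact hne (by linear_combination h2 - h1)
end

section
/- Let r be prime and e_1, ..., e_m the standard basis of F_r^m. For i ∈ {1,...,m} and l ∈ {0,...,r-1}, let f_i^l(x) = x + l·e_i and X_i^l = {x : x_i = -l}; let f_0^l be the identity and X_0^l = {x : x · (1,...,1) = l}. Then for all distinct i, j ∈ {0,...,m} and all l ∈ {0,...,r-1}: f_j^l(X_i^0) = f_i^l(X_i^l). -/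
open Matrix

lemma dotr_eq_dotProduct {r m : ℕ} (x y : Fin m → ZMod r) : dotr x y = x ⬝ᵥ y := rfl

lemma image_add_const_setOf_dotr {r m : ℕ} (u a : Fin m → ZMod r) (c : ZMod r) :
    (· + a) '' {x | dotr x u = c} = {y | dotr y u = c + dotr a u} := by
  ext y
  simp only [Set.image_add_right, Set.mem_preimage, Set.mem_ofPred_eq, dotr_eq_dotProduct,
    add_dotProduct, neg_dotProduct]
  rw [← sub_eq_add_neg, sub_eq_iff_eq_add]

theorem stmt_13_general (r : ℕ) (m : ℕ)
    (i j : Fin (m + 1)) (hij : i ≠ j) (l : ZMod r) :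
    -- v 0 = 0 (f_0 is the identity), v t = e_t for t ≥ 1
    let v : Fin (m + 1) → (Fin m → ZMod r) := fun t =>
      if (t : ℕ) = 0 then 0 else fun k => if (k : ℕ) + 1 = (t : ℕ) then 1 else 0
    -- X_0^l = {x : x · (1,...,1) = l}; X_i^l = {x : x_i = -l} for i ≥ 1
    let X : Fin (m + 1) → ZMod r → Set (Fin m → ZMod r) := fun t l' =>
      if (t : ℕ) = 0 then {x | dotr x (fun _ => 1) = l'} else {x | dotr x (v t) = -l'}
    (fun x => x + l • v j) '' (X i 0) = (fun x => x + l • v i) '' (X i l) := by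
  intro v X
  have hv_succ (k : Fin m) : v k.succ = Pi.single k 1 := by
    ext k'
    simp only [v, Fin.val_succ, Nat.add_one_ne_zero, if_false, Nat.add_right_cancel_iff,
      Pi.single_apply, Fin.ext_iff]
  cases i using Fin.cases with
  | zero =>
    obtain ⟨k, rfl⟩ := Fin.exists_succ_eq.mpr hij.symm
    have hX (c : ZMod r) : X 0 c = {x | dotr x (fun _ => 1) = c} := rfl
    have hv_zero : v 0 = 0 := rfl
    rw [hX, hX, image_add_const_setOf_dotr, image_add_const_setOf_dotr, hv_succ, hv_zero]
    congr 3
    simp [dotr_eq_dotProduct]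
  | succ k =>
    have hX (c : ZMod r) : X k.succ c = {x | dotr x (Pi.single k 1) = -c} := by
      simp only [X, Fin.val_succ, Nat.add_one_ne_zero, if_false, hv_succ]
    have hvj : v j k = 0 := by
      cases j using Fin.cases with
      | zero => rfl
      | succ k' => exact hv_succ k' ▸ Pi.single_eq_of_ne (fun h => hij (congrArg Fin.succ h)) 1
    rw [hX, hX, image_add_const_setOf_dotr, image_add_const_setOf_dotr, hv_succ]
    congr 3
    simp [dotr_eq_dotProduct, hvj]

theorem stmt_13 (r : ℕ) [NeZero r] (hr : r.Prime) (m : ℕ)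
    (i j : Fin (m + 1)) (hij : i ≠ j) (l : ZMod r) :
    -- v 0 = 0 (f_0 is the identity), v t = e_t for t ≥ 1
    let v : Fin (m + 1) → (Fin m → ZMod r) := fun t =>
      if (t : ℕ) = 0 then 0 else fun k => if (k : ℕ) + 1 = (t : ℕ) then 1 else 0
    -- X_0^l = {x : x · (1,...,1) = l}; X_i^l = {x : x_i = -l} for i ≥ 1
    let X : Fin (m + 1) → ZMod r → Set (Fin m → ZMod r) := fun t l' =>
      if (t : ℕ) = 0 then {x | dotr x (fun _ => 1) = l'} else {x | dotr x (v t) = -l'}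
    (fun x => x + l • v j) '' (X i 0) = (fun x => x + l • v i) '' (X i l) :=
  stmt_13_general r m i j hij l
end

section
/- Any family of orthogonal permutations over {0, ..., r^m - 1} with r parities has size at most m + 1. -/
theorem stmt_14 (r m k : ℕ) (hr : 2 ≤ r)
    (f : Fin k → Fin r → Equiv.Perm (Fin (r ^ m)))
    (X : Fin k → Fin r → Finset (Fin (r ^ m)))
    -- each {X i l}_l is an equally-sized partition of the set of size r^m
    (hcard : ∀ i l, (X i l).card = r ^ (m - 1))
    (hdisj : ∀ i, ∀ l l' : Fin r, l ≠ l' → Disjoint (X i l) (X i l'))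
    (hcover : ∀ i, Finset.univ.biUnion (fun l => X i l) = Finset.univ)
    -- orthogonality: for all i ≠ j and all l, f_j^l (X_i^0) = f_i^l (X_i^l)
    (horth : ∀ i j : Fin k, i ≠ j → ∀ l : Fin r,
      (X i ⟨0, lt_of_lt_of_le (by norm_num) hr⟩).image (f j l) = (X i l).image (f i l)) :
    k ≤ m + 1 := by
  by_contra hk
  push_neg at hk
  set z : Fin r := ⟨0, lt_of_lt_of_le (by norm_num) hr⟩ with hz
  have mem_image_equiv : ∀ (g : Equiv.Perm (Fin (r ^ m))) (s : Finset (Fin (r ^ m)))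
      (y : Fin (r ^ m)), y ∈ s.image g ↔ g.symm y ∈ s := by
    intro g s y
    constructor
    · rintro hy
      obtain ⟨a, ha, rfl⟩ := Finset.mem_image.mp hy
      simpa using ha
    · intro h
      exact Finset.mem_image.mpr ⟨g.symm y, h, by simp⟩
  have key : ∀ I : Finset (Fin k), I.card < k →
      r ^ I.card * (Finset.univ.filter (fun x => ∀ i ∈ I, x ∈ X i z)).card = r ^ m := by
    intro I
    induction I using Finset.induction_on with
    | empty =>
      intro _
      simp
    | @insert j2 I' hj2 ih =>
      intro hcardI
      have hcins : (insert j2 I').card = I'.card + 1 := Finset.card_insert_of_notMem hj2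
      have hI' : I'.card < k := by omega
      obtain ⟨j1, hj1⟩ : ∃ j1 : Fin k, j1 ∉ insert j2 I' := by
        by_contra h
        push_neg at h
        have hsub : (Finset.univ : Finset (Fin k)) ⊆ insert j2 I' := fun x _ => h x
        have := Finset.card_le_card hsub
        simp only [Finset.card_univ, Fintype.card_fin] at this
        omega
      have hj1j2 : j1 ≠ j2 := fun h => hj1 (h ▸ Finset.mem_insert_self j2 I')
      have hj1I' : j1 ∉ I' := fun h => hj1 (Finset.mem_insert_of_mem h)
      set A : Finset (Fin (r ^ m)) :=
        Finset.univ.filter (fun x => ∀ i ∈ I', x ∈ X i z) with hA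
      -- the images of A under f j1 l and f j2 l coincide
      have himA : ∀ l : Fin r, A.image (f j1 l) = A.image (f j2 l) := by
        intro l
        ext y
        rw [mem_image_equiv, mem_image_equiv, hA]
        simp only [Finset.mem_filter, Finset.mem_univ, true_and]
        have hmem : ∀ i ∈ I', ((f j1 l).symm y ∈ X i z ↔ (f j2 l).symm y ∈ X i z) := by
          intro i hi
          have hij1 : i ≠ j1 := fun h => hj1I' (h ▸ hi)
          have hij2 : i ≠ j2 := fun h => hj2 (h ▸ hi)
          have e1 := horth i j1 hij1 l
          have e2 := horth i j2 hij2 l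
          have h1 := mem_image_equiv (f j1 l) (X i z) y
          have h2 := mem_image_equiv (f j2 l) (X i z) y
          rw [← h1, ← h2, e1, e2]
        constructor
        · intro h i hi; exact (hmem i hi).mp (h i hi)
        · intro h i hi; exact (hmem i hi).mpr (h i hi)
      -- card of A ∩ X j2 l is independent of l
      have hconst : ∀ l : Fin r, (A ∩ X j2 l).card = (A ∩ X j2 z).card := by
        intro l
        have e : (A ∩ X j2 z).image (f j1 l) = (A ∩ X j2 l).image (f j2 l) := by
          rw [Finset.image_inter _ _ (f j1 l).injective,
              Finset.image_inter _ _ (f j2 l).injective, himA l,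
              horth j2 j1 (Ne.symm hj1j2) l]
        have c1 : ((A ∩ X j2 z).image (f j1 l)).card = (A ∩ X j2 z).card :=
          Finset.card_image_of_injective _ (f j1 l).injective
        have c2 : ((A ∩ X j2 l).image (f j2 l)).card = (A ∩ X j2 l).card :=
          Finset.card_image_of_injective _ (f j2 l).injective
        rw [← c2, ← e, c1]
      -- summing over l
      have hsum : ∑ l : Fin r, (A ∩ X j2 l).card = A.card := by
        have hbi : A = Finset.univ.biUnion (fun l : Fin r => A ∩ X j2 l) := by
          ext x
          simp only [Finset.mem_biUnion, Finset.mem_inter, Finset.mem_univ, true_and]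
          constructor
          · intro hx
            have : x ∈ Finset.univ.biUnion (fun l => X j2 l) := by
              rw [hcover j2]; exact Finset.mem_univ x
            obtain ⟨l, _, hl⟩ := Finset.mem_biUnion.mp this
            exact ⟨l, hx, hl⟩
          · rintro ⟨l, hx, _⟩; exact hx
        have hd : ∀ l ∈ (Finset.univ : Finset (Fin r)), ∀ l' ∈ (Finset.univ : Finset (Fin r)),
            l ≠ l' → Disjoint (A ∩ X j2 l) (A ∩ X j2 l') := by
          intro l _ l' _ hll'
          exact Finset.disjoint_of_subset_left Finset.inter_subset_right
            (Finset.disjoint_of_subset_right Finset.inter_subset_right (hdisj j2 l l' hll'))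
        have hcb := Finset.card_biUnion hd
        rw [← hbi] at hcb
        exact hcb.symm
      have hrA : r * (A ∩ X j2 z).card = A.card := by
        rw [← hsum]
        rw [Finset.sum_congr rfl (fun l _ => hconst l)]
        simp [Finset.sum_const, Finset.card_univ, mul_comm]
      -- rewrite the filter over insert as intersection
      have hfili : Finset.univ.filter (fun x => ∀ i ∈ insert j2 I', x ∈ X i z)
          = A ∩ X j2 z := by
        ext x
        simp only [hA, Finset.mem_filter, Finset.mem_inter, Finset.mem_univ, true_and,
          Finset.mem_insert]
        constructor
        · intro h
          exact ⟨fun i hi => h i (Or.inr hi), h j2 (Or.inl rfl)⟩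
        · rintro ⟨h1, h2⟩ i hi
          rcases hi with rfl | hi
          · exact h2
          · exact h1 i hi
      rw [hfili, hcins, pow_succ, mul_assoc, hrA]
      exact ih hI'
  -- pick a set of m+1 indices
  obtain ⟨I, _, hIcard⟩ := Finset.exists_subset_card_eq (s := (Finset.univ : Finset (Fin k))) (n := m + 1)
    (by simp only [Finset.card_univ, Fintype.card_fin]; omega)
  have hkey := key I (by rw [hIcard]; omega)
  rw [hIcard] at hkey
  set c := (Finset.univ.filter (fun x => ∀ i ∈ I, x ∈ X i z)).card with hc
  have hrm : 0 < r ^ m := Nat.pow_pos (n := m) (by omega)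
  have hcpos : 0 < c := by
    rcases Nat.eq_zero_or_pos c with h | h
    · rw [h, mul_zero] at hkey; omega
    · exact h
  have h1 : r ^ (m + 1) ≤ r ^ m := by
    calc r ^ (m + 1) = r ^ (m + 1) * 1 := (mul_one _).symm
    _ ≤ r ^ (m + 1) * c := Nat.mul_le_mul_left _ hcpos
    _ = r ^ m := hkey
  have h2 : r ^ m < r ^ (m + 1) := Nat.pow_lt_pow_right (by omega) (Nat.lt_succ_self m)
  omega
end

section
/- Say a finite set S of vectors in F_r^m satisfies property e (for 1 ≤ e ≤ |S| - 1) if for every subset A ⊆ S of size e, every u ∈ A, and every v ∈ S \ A: u - v ∉ span{w - v : w ∈ S \ A}. If S satisfies property e, then S satisfies property e + 1 (whenever e + 1 ≤ |S| - 1). -/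
/-- Property `e` for a finite set `S` of vectors in `F_r^m`: for every subset
`A ⊆ S` of size `e`, every `u ∈ A` and every `v ∈ S \ A`,
`u - v ∉ span{w - v : w ∈ S \ A}`. -/
def propertyE (r m : ℕ) (S : Finset (Fin m → ZMod r)) (e : ℕ) : Prop :=
  ∀ A : Finset (Fin m → ZMod r), A ⊆ S → A.card = e →
    ∀ u ∈ A, ∀ v ∈ (S : Set (Fin m → ZMod r)) \ (A : Set (Fin m → ZMod r)),
      u - v ∉ Submodule.span (ZMod r)
        ((fun w => w - v) '' ((S : Set (Fin m → ZMod r)) \ (A : Set (Fin m → ZMod r))))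

/-! Given a violation of property `e + 1` at `(A, u, v)`, drop from `A` some `a ≠ u` (it exists
since `|A| ≥ 2`). This only enlarges `S \ A` and hence the span, so `(A.erase a, u, v)` violates
property `e`. -/

theorem stmt_17_general (r : ℕ) (m : ℕ)
    (S : Finset (Fin m → ZMod r)) (e : ℕ) (he1 : 1 ≤ e)
    (hprop : propertyE r m S e) : propertyE r m S (e + 1) := by
  intro A hAS hAcard u hu v hv hspan
  obtain ⟨a, haA, hau⟩ := Finset.exists_mem_ne (s := A) (by omega) u
  have hcompl : (S : Set (Fin m → ZMod r)) \ A ⊆ S \ (A.erase a : Finset _) :=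
    Set.sdiff_subset_sdiff_right (Finset.coe_subset.2 (A.erase_subset a))
  refine hprop (A.erase a) ((A.erase_subset a).trans hAS) ?_ u (Finset.mem_erase.2 ⟨hau.symm, hu⟩)
    v (hcompl hv) (Submodule.span_mono (Set.image_mono hcompl) hspan)
  rw [Finset.card_erase_of_mem haA, hAcard, Nat.add_sub_cancel]

theorem stmt_17 (r : ℕ) [NeZero r] (hr : r.Prime) (m : ℕ)
    (S : Finset (Fin m → ZMod r)) (e : ℕ) (he1 : 1 ≤ e) (he2 : e + 1 ≤ S.card - 1)
    (hprop : propertyE r m S e) : propertyE r m S (e + 1) :=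
  stmt_17_general r m S e he1 hprop
end

section
/- Let r be prime, e < r, and v_0, ..., v_{k-1} ∈ F_r^m such that Z = span{v_i - v_e : i ∈ I} for some I ⊆ {e, ..., k-1} with e ∈ I, and v_i - v_e ∉ Z for all erased indices i ∈ {0, ..., e-1}. Then there exists u ∈ F_r^m with u orthogonal to Z (i.e., u · z = 0 for all z ∈ Z) such that u · (v_i - v_e) ≠ 0 for every i ∈ {0, ..., e-1}. Consequently the hyperplane X_0 = {x : u · x = 0} contains Z and satisfies X_0 ⊕ span{v_i - v_e} = F_r^m for each erased i. -/
/-!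
Functionals vanishing on `Z` form the annihilator `Zᗮ`; for each erased `i` those that also kill
`vᵢ - vₑ` form a proper subspace of `Zᗮ`, since `vᵢ - vₑ ∉ Z`. Over a field with more than `e`
elements a space is never the union of `e` proper subspaces, so some `u ∈ Zᗮ` is nonzero on every
`vᵢ - vₑ`. A nonzero functional has a hyperplane as kernel, and any vector off that hyperplane
spans a complement of it.
-/

open Module

theorem Submodule.exists_mem_dualAnnihilator_forall_apply_ne_zero {ι K M : Type*} [Fintype ι]
    [Field K] [AddCommGroup M] [Module K M] (Z : Submodule K M) {w : ι → M}
    (hw : ∀ i, w i ∉ Z) (hcard : Fintype.card ι < ENat.card K) :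
    ∃ f ∈ Z.dualAnnihilator, ∀ i, f (w i) ≠ 0 := by
  let p (i : ι) : Submodule K Z.dualAnnihilator :=
    LinearMap.ker ((Dual.eval K M (w i)).domRestrict Z.dualAnnihilator)
  have hp (i : ι) : p i ≠ ⊤ := by
    obtain ⟨f, hfZ, hfw⟩ : ∃ f ∈ Z.dualAnnihilator, f (w i) ≠ 0 := by
      by_contra! h
      exact hw i ((Subspace.forall_mem_dualAnnihilator_apply_eq_zero_iff Z (w i)).mp h)
    rw [Ne, Submodule.eq_top_iff']
    exact fun h => hfw (h ⟨f, hfZ⟩)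
  obtain ⟨⟨f, hfZ⟩, hf⟩ := Set.ne_univ_iff_exists_notMem _ |>.mp <| Set.ssubset_univ_iff.mp <|
    Submodule.iUnion_ssubset_of_forall_ne_top_of_card_lt (M := Z.dualAnnihilator) Finset.univ p hp
      (by simpa using hcard)
  exact ⟨f, hfZ, by simpa [p] using hf⟩

theorem LinearMap.isCompl_ker_span_singleton {K V : Type*} [Field K] [AddCommGroup V]
    [Module K V] {f : Dual K V} {x : V} (hx : f x ≠ 0) : IsCompl (ker f) (K ∙ x) :=
  Submodule.isCompl_span_singleton_of_isCoatom_of_notMem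
    (isCoatom_ker_of_surjective (surjective_of_ne_zero (by rintro rfl; exact hx rfl))) hx

theorem LinearMap.sum_apply_single_smul_proj {ι R : Type*} [Fintype ι] [DecidableEq ι]
    [CommSemiring R] (f : (ι → R) →ₗ[R] R) : ∑ t, f (Pi.single t 1) • proj t = f := by
  ext i
  simp [Pi.single_apply]

theorem stmt_18_general (r : ℕ) (hr : r.Prime) (m e : ℕ) (he : e < r)
    (v : ℕ → (Fin m → ZMod r)) (I : Set ℕ) :
    let Z : Submodule (ZMod r) (Fin m → ZMod r) :=
      Submodule.span (ZMod r) ((fun i => v i - v e) '' I)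
    (∀ i < e, v i - v e ∉ Z) →
    ∃ u : Fin m → ZMod r,
      (∀ z ∈ Z, ∑ t, u t * z t = 0) ∧
      (∀ i < e, ∑ t, u t * (v i - v e) t ≠ 0) ∧
      (Z ≤ LinearMap.ker (∑ t, u t • (LinearMap.proj t :
          (Fin m → ZMod r) →ₗ[ZMod r] ZMod r))) ∧
      (∀ i < e,
        IsCompl
          (LinearMap.ker (∑ t, u t • (LinearMap.proj t :
            (Fin m → ZMod r) →ₗ[ZMod r] ZMod r)))
          (Submodule.span (ZMod r) {v i - v e})) := by
  intro Z hZ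
  have := Fact.mk hr
  obtain ⟨f, hfZ, hf⟩ := Z.exists_mem_dualAnnihilator_forall_apply_ne_zero
    (w := fun i : Fin e => v i - v e) (fun i => hZ i i.isLt) (by simpa using he)
  have hfu : ∑ t, f (Pi.single t 1) • LinearMap.proj t = f := f.sum_apply_single_smul_proj
  have hdot (x : Fin m → ZMod r) : ∑ t, f (Pi.single t 1) * x t = f x := by
    conv_rhs => rw [← hfu]
    simp
  refine ⟨fun t => f (Pi.single t 1), fun z hz => ?_, fun i hi => ?_, ?_, fun i hi => ?_⟩
  · rw [hdot]; exact (Submodule.mem_dualAnnihilator f).mp hfZ z hz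
  · rw [hdot]; exact hf ⟨i, hi⟩
  · rw [hfu]; exact fun z hz => (Submodule.mem_dualAnnihilator f).mp hfZ z hz
  · rw [hfu]; exact LinearMap.isCompl_ker_span_singleton (hf ⟨i, hi⟩)

theorem stmt_18 (r : ℕ) [NeZero r] (hr : r.Prime) (m k e : ℕ) (he : e < r)
    (v : ℕ → (Fin m → ZMod r)) (I : Set ℕ) (hI : I ⊆ Set.Icc e (k - 1)) (heI : e ∈ I) :
    let Z : Submodule (ZMod r) (Fin m → ZMod r) :=
      Submodule.span (ZMod r) ((fun i => v i - v e) '' I)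
    (∀ i < e, v i - v e ∉ Z) →
    ∃ u : Fin m → ZMod r,
      (∀ z ∈ Z, ∑ t, u t * z t = 0) ∧
      (∀ i < e, ∑ t, u t * (v i - v e) t ≠ 0) ∧
      (Z ≤ LinearMap.ker (∑ t, u t • (LinearMap.proj t :
          (Fin m → ZMod r) →ₗ[ZMod r] ZMod r))) ∧
      (∀ i < e,
        IsCompl
          (LinearMap.ker (∑ t, u t • (LinearMap.proj t :
            (Fin m → ZMod r) →ₗ[ZMod r] ZMod r)))
          (Submodule.span (ZMod r) {v i - v e})) :=
  stmt_18_general r hr m e he v I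
end
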